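/- arXiv:1306.2536 — 9 statements merged into one kernel-verified Lean document; each statement's English description precedes it below -/
import Mathlib

section
/- Let d ≥ 1 and m ≥ 1, and let C ⊆ (Fin (2*m) → ZMod d) be a code with exactly d^m codewords such that any two distinct codewords have Hamming distance at least m+1. Let Φ ∈ EuclideanSpace ℂ (Fin (2*m) → ZMod d) be the unit vector with Φ(x) = (Real.sqrt (d^m))⁻¹ if x ∈ C and Φ(x) = 0 otherwise (the state (1/√(d^m)) ∑_{c∈C} |c⟩). Then for every subset B ⊆ Fin (2*m) with |B| = m, with A = Bᶜ its complement, the family of vectors (φ_k) indexed by k : B → ZMod d, where φ_k ∈ EuclideanSpace ℂ (A → ZMod d) is defined by φ_k(y) = Real.sqrt (d^m) · Φ(x_{k,y}) with x_{k,y} the word of length 2m agreeing with k on the coordinates in B and with y on the coordinates in A, is an orthonormal family. (Hence Φ has the Schmidt form (1/√(d^m)) ∑_k |k⟩_B |φ_k⟩_A with orthonormal φ_k for every bipartition into two sets of m parties; that is, Φ is an AME(2m,d) state constructed from the MDS code C.) -/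
/-!
Two codewords that agree on `m` of the `2m` coordinates differ in at most `m` places, so by the
distance bound they coincide: restriction to `B`, and likewise to `A = Bᶜ`, is injective on `C`.
Since `C` has `d ^ m` elements, restriction to `B` is even a bijection onto `B → ZMod d`, so each
`k` extends to exactly one codeword `c k`. Hence `φ_k` is the basis vector at `c k` restricted to
`A`, and distinct `k` give distinct basis vectors by injectivity of restriction to `A`.
-/

open Finset

section Glue

variable {ι β : Type*} [Fintype ι] [DecidableEq ι] (s : Finset ι)

def glueCompl (k : s → β) (y : ↥sᶜ → β) : ι → β :=
  fun i => if h : i ∈ s then k ⟨i, h⟩ else y ⟨i, mem_compl.mpr h⟩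

@[simp]
theorem restrict_glueCompl (k : s → β) (y : ↥sᶜ → β) :
    s.restrict (glueCompl s k y) = k := by
  funext i
  simp [glueCompl, Finset.restrict, i.2]

@[simp]
theorem restrict_compl_glueCompl (k : s → β) (y : ↥sᶜ → β) :
    sᶜ.restrict (glueCompl s k y) = y := by
  funext i
  simp [glueCompl, Finset.restrict, mem_compl.mp i.2]

@[simp]
theorem glueCompl_restrict (x : ι → β) : glueCompl s (s.restrict x) (sᶜ.restrict x) = x := by
  funext i
  by_cases h : i ∈ s <;> simp [glueCompl, Finset.restrict, h]

theorem glueCompl_mem_iff {C : Set (ι → β)} (hinj : Set.InjOn s.restrict C) {c : ι → β}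
    (hc : c ∈ C) (y : ↥sᶜ → β) :
    glueCompl s (s.restrict c) y ∈ C ↔ y = sᶜ.restrict c := by
  constructor
  · intro hy
    rw [← hinj hy hc (restrict_glueCompl s _ y), restrict_compl_glueCompl]
  · rintro rfl
    rwa [glueCompl_restrict]

end Glue

section Code

variable {ι β : Type*} [DecidableEq β]

theorem hammingDist_le_card_of_eq_of_notMem [Fintype ι] {x y : ι → β} {t : Finset ι}
    (h : ∀ i ∉ t, x i = y i) : hammingDist x y ≤ #t :=
  card_le_card fun i hi => by_contra fun hit => (mem_filter.mp hi).2 (h i hit)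

theorem injOn_restrict_of_card_compl_lt_hammingDist [Fintype ι] [DecidableEq ι]
    {C : Set (ι → β)} (s : Finset ι)
    (hC : ∀ c ∈ C, ∀ c' ∈ C, c ≠ c' → #sᶜ < hammingDist c c') :
    Set.InjOn s.restrict C := by
  intro c hc c' hc' h
  by_contra hne
  refine (hC c hc c' hc' hne).not_ge (hammingDist_le_card_of_eq_of_notMem fun i hi => ?_)
  exact congrFun h ⟨i, notMem_compl.mp hi⟩

theorem exists_mem_restrict_eq_of_card_eq [DecidableEq ι] [Fintype β]
    {C : Finset (ι → β)} {s : Finset ι}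
    (hinj : Set.InjOn s.restrict (C : Set (ι → β)))
    (hcard : #C = Fintype.card β ^ #s) (k : s → β) : ∃ c ∈ C, s.restrict c = k := by
  have himage : C.image s.restrict = univ := by
    apply eq_univ_of_card
    rw [card_image_of_injOn hinj, hcard, Fintype.card_fun, Fintype.card_coe]
  rw [← mem_image, himage]
  exact mem_univ k

theorem orthonormal_indicator_glueCompl [Fintype ι] [DecidableEq ι] [Fintype β]
    {C : Finset (ι → β)} (s : Finset ι)
    (hdist : ∀ c ∈ C, ∀ c' ∈ C, c ≠ c' → max #s #sᶜ < hammingDist c c')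
    (hcard : #C = Fintype.card β ^ #s) :
    Orthonormal ℂ (fun k : s → β =>
      WithLp.toLp 2 fun y : ↥sᶜ → β => if glueCompl s k y ∈ C then (1 : ℂ) else 0) := by
  have hinjB : Set.InjOn s.restrict (C : Set (ι → β)) :=
    injOn_restrict_of_card_compl_lt_hammingDist s fun c hc c' hc' hne =>
      (max_lt_iff.mp (hdist c hc c' hc' hne)).2
  have hinjA : Set.InjOn sᶜ.restrict (C : Set (ι → β)) :=
    injOn_restrict_of_card_compl_lt_hammingDist sᶜ fun c hc c' hc' hne => by
      simpa only [compl_compl] using (max_lt_iff.mp (hdist c hc c' hc' hne)).1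
  choose c hcC hck using exists_mem_restrict_eq_of_card_eq hinjB hcard
  have hsingle : (fun k : s → β =>
      WithLp.toLp 2 fun y : ↥sᶜ → β => if glueCompl s k y ∈ C then (1 : ℂ) else 0) =
      fun k => EuclideanSpace.single (sᶜ.restrict (c k)) 1 := by
    funext k
    ext y
    simp only [PiLp.single_apply]
    refine if_congr ?_ rfl rfl
    rw [← glueCompl_mem_iff s hinjB (hcC k), hck, mem_coe]
  have hinj : Function.Injective fun k => sᶜ.restrict (c k) := fun k k' h => by
    rw [← hck k, ← hck k', hinjA (hcC k) (hcC k') h]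
  rw [hsingle]
  exact EuclideanSpace.orthonormal_single.comp _ hinj

end Code

theorem mds_state_is_AME_general (d m : ℕ) [NeZero d]
    (C : Finset (Fin (2 * m) → ZMod d))
    (hcard : C.card = d ^ m)
    (hdist : ∀ c ∈ C, ∀ c' ∈ C, c ≠ c' → m + 1 ≤ hammingDist c c')
    (Φ : EuclideanSpace ℂ (Fin (2 * m) → ZMod d))
    (hΦ : ∀ x : Fin (2 * m) → ZMod d,
      Φ x = if x ∈ C then (((Real.sqrt ((d : ℝ) ^ m))⁻¹ : ℝ) : ℂ) else 0)
    (B : Finset (Fin (2 * m))) (hB : B.card = m) :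
    Orthonormal ℂ (fun k : {i // i ∈ B} → ZMod d =>
      (WithLp.equiv 2 (({i // i ∈ Bᶜ} → ZMod d) → ℂ)).symm
        (fun y : {i // i ∈ Bᶜ} → ZMod d =>
          ((Real.sqrt ((d : ℝ) ^ m) : ℝ) : ℂ) *
            Φ (fun i : Fin (2 * m) =>
              if h : i ∈ B then k ⟨i, h⟩ else y ⟨i, Finset.mem_compl.mpr h⟩))) := by
  have hBc : #Bᶜ = m := by rw [card_compl, hB, Fintype.card_fin]; omega
  have hd : (0 : ℝ) < d := Nat.cast_pos.mpr (NeZero.pos d)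
  have hscale :
      ((Real.sqrt ((d : ℝ) ^ m) : ℝ) : ℂ) * (((Real.sqrt ((d : ℝ) ^ m))⁻¹ : ℝ) : ℂ) = 1 := by
    rw [← Complex.ofReal_mul, mul_inv_cancel₀ (by positivity), Complex.ofReal_one]
  have horth := orthonormal_indicator_glueCompl B
    (fun c hc c' hc' hne => by rw [hB, hBc, max_self]; exact hdist c hc c' hc' hne)
    (by rw [hcard, ZMod.card, hB])
  convert horth using 2 with k
  ext y
  rw [WithLp.equiv_symm_apply, PiLp.toLp_apply, PiLp.toLp_apply, hΦ, mul_ite, mul_zero,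
    hscale]
  rfl

/-- **MDS codes give AME(2m,d) states.**
Let `Φ` be the unit vector `(1/√(d^m)) ∑_{c ∈ C} |c⟩` built from an MDS code `C`
of length `2m` and minimum distance `m+1` with `d^m` codewords.  Then for every
bipartition of the `2m` parties into `B` (with `|B| = m`) and `A = Bᶜ`, the family
of vectors `φ_k (y) = √(d^m) · Φ (x_{k,y})`, indexed by `k : B → ZMod d`, where
`x_{k,y}` agrees with `k` on `B` and with `y` on `A`, is orthonormal.  Hence `Φ`
has the Schmidt form `(1/√(d^m)) ∑_k |k⟩_B |φ_k⟩_A` for every such bipartition,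
i.e. `Φ` is absolutely maximally entangled. -/
theorem mds_state_is_AME (d m : ℕ) [NeZero d] (hm : 1 ≤ m)
    (C : Finset (Fin (2 * m) → ZMod d))
    (hcard : C.card = d ^ m)
    (hdist : ∀ c ∈ C, ∀ c' ∈ C, c ≠ c' → m + 1 ≤ hammingDist c c')
    (Φ : EuclideanSpace ℂ (Fin (2 * m) → ZMod d))
    (hΦ : ∀ x : Fin (2 * m) → ZMod d,
      Φ x = if x ∈ C then (((Real.sqrt ((d : ℝ) ^ m))⁻¹ : ℝ) : ℂ) else 0)
    (B : Finset (Fin (2 * m))) (hB : B.card = m) :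
    Orthonormal ℂ (fun k : {i // i ∈ B} → ZMod d =>
      (WithLp.equiv 2 (({i // i ∈ Bᶜ} → ZMod d) → ℂ)).symm
        (fun y : {i // i ∈ Bᶜ} → ZMod d =>
          ((Real.sqrt ((d : ℝ) ^ m) : ℝ) : ℂ) *
            Φ (fun i : Fin (2 * m) =>
              if h : i ∈ B then k ⟨i, h⟩ else y ⟨i, Finset.mem_compl.mpr h⟩))) :=
  mds_state_is_AME_general d m C hcard hdist Φ hΦ B hB
end

section
/- Let m ≥ 1, let P = Fin (2*m) with a designated element r (the reference party), and let s : ℝ. Suppose S : Finset (Fin (2*m)) → ℝ satisfies: S ∅ = 0; S {i} = s for every i; subadditivity, S (X ∪ Y) ≤ S X + S Y for disjoint X, Y; the Araki–Lieb inequality, S (X ∪ Y) ≥ S X − S Y for disjoint X, Y; strong subadditivity (submodularity), S (X ∪ Y) + S (X ∩ Y) ≤ S X + S Y for all X, Y; the authorized-set condition, S (A ∪ {r}) = S A − s for every A ⊆ Fin (2*m) with r ∉ A and |A| ≥ m; and the unauthorized-set condition, S (B ∪ {r}) = S B + s for every B ⊆ Fin (2*m) with r ∉ B and |B| ≤ m−1.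 Then S X = |X| · s for every X ⊆ Fin (2*m) with |X| ≤ m. (This is the entropy content of the direction of Theorem 3 asserting that the purification of an ((m, 2m−1)) threshold quantum secret sharing scheme with share and secret dimension d is an AME(2m,d) state: taking s = log d, the entropy of every set of at most m of the 2m parties is maximal.) -/
/-- **Threshold QSS schemes purify to AME states (entropy content).**
If an entropy function `S` on subsets of the `2m` parties (the `2m−1` players plus the
reference party `r`) satisfies the standard entropy inequalities (subadditivity,
Araki–Lieb, strong subadditivity), assigns entropy `s` to singletons, `0` to the
empty set, and satisfies the authorized/unauthorized conditions of an
`((m, 2m−1))` threshold QSS scheme, then every set of at most `m` parties has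
maximal entropy `|X| · s`.  With `s = log d` this says the purification of the QSS
scheme is an AME(2m,d) state. -/
theorem qss_purification_is_AME (m : ℕ) (hm : 1 ≤ m) (r : Fin (2 * m)) (s : ℝ)
    (S : Finset (Fin (2 * m)) → ℝ)
    (hempty : S ∅ = 0)
    (hsingle : ∀ i : Fin (2 * m), S {i} = s)
    (hsubadd : ∀ X Y : Finset (Fin (2 * m)), Disjoint X Y → S (X ∪ Y) ≤ S X + S Y)
    (hAL : ∀ X Y : Finset (Fin (2 * m)), Disjoint X Y → S X - S Y ≤ S (X ∪ Y))
    (hSSA : ∀ X Y : Finset (Fin (2 * m)), S (X ∪ Y) + S (X ∩ Y) ≤ S X + S Y)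
    (hauth : ∀ A : Finset (Fin (2 * m)), r ∉ A → m ≤ A.card →
      S (A ∪ {r}) = S A - s)
    (hunauth : ∀ B : Finset (Fin (2 * m)), r ∉ B → B.card ≤ m - 1 →
      S (B ∪ {r}) = S B + s) :
    ∀ X : Finset (Fin (2 * m)), X.card ≤ m → S X = (X.card : ℝ) * s := by
  have key : ∀ n : ℕ, ∀ X : Finset (Fin (2 * m)), X.card = n → n ≤ m →
      S X = (n : ℝ) * s := by
    intro n
    induction n with
    | zero =>
      intro X hX _
      rw [Finset.card_eq_zero.mp hX, hempty]; simp
    | succ n ih =>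
      intro X hX hnm
      by_cases hr : r ∈ X
      · -- remove the reference party and use the unauthorized condition
        set X' := X.erase r with hX'def
        have hrX' : r ∉ X' := Finset.notMem_erase _ _
        have hcard : X'.card = n := by
          rw [hX'def, Finset.card_erase_of_mem hr, hX]
          omega
        have h1 : S (X' ∪ {r}) = S X' + s := hunauth X' hrX' (by omega)
        have h2 : X' ∪ {r} = X := by
          rw [Finset.union_comm, ← Finset.insert_eq, Finset.insert_erase hr]
        have h3 := ih X' hcard (by omega)
        rw [← h2, h1, h3]; push_cast; ring
      · obtain ⟨i, hi⟩ : X.Nonempty := Finset.card_pos.mp (by omega)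
        have hir : i ≠ r := fun h => hr (h ▸ hi)
        set X' := X.erase i with hX'def
        have hiX' : i ∉ X' := Finset.notMem_erase _ _
        have hrX' : r ∉ X' := fun h => hr (Finset.mem_of_mem_erase h)
        have hcard : X'.card = n := by
          rw [hX'def, Finset.card_erase_of_mem hi, hX]
          omega
        have hIX : X' ∪ {i} = X := by
          rw [Finset.union_comm, ← Finset.insert_eq, Finset.insert_erase hi]
        have hX'S : S X' = (n : ℝ) * s := ih X' hcard (by omega)
        -- upper bound by subadditivity
        have hub : S X ≤ S X' + s := by
          have := hsubadd X' {i} (Finset.disjoint_singleton_right.mpr hiX')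
          rwa [hIX, hsingle i] at this
        -- extend X' to a set B of size m-1 avoiding i and r
        have hsub : X' ⊆ Finset.univ \ {i, r} := by
          intro x hx
          simp only [Finset.mem_sdiff, Finset.mem_univ, true_and, Finset.mem_insert,
            Finset.mem_singleton]
          push_neg
          exact ⟨fun h => hiX' (h ▸ hx), fun h => hrX' (h ▸ hx)⟩
        have hcardU : (Finset.univ \ ({i, r} : Finset (Fin (2 * m)))).card = 2 * m - 2 := by
          rw [Finset.card_sdiff_of_subset (Finset.subset_univ _), Finset.card_univ, Fintype.card_fin]
          rw [Finset.card_insert_of_notMem (by simp [hir]), Finset.card_singleton]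
        obtain ⟨B, hX'B, hBsub, hBcard⟩ :=
          Finset.exists_subsuperset_card_eq (n := m - 1) hsub (by omega) (by omega)
        have hiB : i ∉ B := fun h => by
          have := hBsub h; simp at this
        have hrB : r ∉ B := fun h => by
          have := hBsub h; simp at this
        have h_un : S (B ∪ {r}) = S B + s := hunauth B hrB (le_of_eq hBcard)
        have hBiR : r ∉ B ∪ {i} := by simp [hrB, hir.symm, Ne.symm hir]
        have hBicard : m ≤ (B ∪ {i}).card := by
          rw [Finset.union_comm, ← Finset.insert_eq,
            Finset.card_insert_of_notMem hiB, hBcard]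
          omega
        have h_au : S (B ∪ {i} ∪ {r}) = S (B ∪ {i}) - s := hauth _ hBiR hBicard
        have hdisj : Disjoint (B ∪ {r}) ({i} : Finset (Fin (2 * m))) := by
          simp [Finset.disjoint_singleton_right, hiB, hir]
        have hAL1 := hAL (B ∪ {r}) {i} hdisj
        have hcomm : B ∪ {r} ∪ {i} = B ∪ {i} ∪ {r} := by
          ext x; simp; tauto
        rw [hcomm, h_au, h_un, hsingle] at hAL1
        -- hAL1 : S B + s - s ≤ S (B ∪ {i}) - s
        -- strong subadditivity: submodularity step
        have hunion : B ∪ (X' ∪ {i}) = B ∪ {i} := by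
          ext x
          simp only [Finset.mem_union, Finset.mem_singleton]
          constructor
          · rintro (h | h | h)
            · exact Or.inl h
            · exact Or.inl (hX'B h)
            · exact Or.inr h
          · rintro (h | h)
            · exact Or.inl h
            · exact Or.inr (Or.inr h)
        have hinter : B ∩ (X' ∪ {i}) = X' := by
          ext x
          simp only [Finset.mem_inter, Finset.mem_union, Finset.mem_singleton]
          constructor
          · rintro ⟨hB, hX | hxi⟩
            · exact hX
            · exact absurd (hxi ▸ hB) hiB
          · intro h; exact ⟨hX'B h, Or.inl h⟩
        have hssa := hSSA B (X' ∪ {i})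
        rw [hunion, hinter, hIX] at hssa
        -- hssa : S (B ∪ {i}) + S X' ≤ S B + S X
        push_cast
        linarith
  intro X hX
  exact key X.card X rfl hX
end

section
/- Let m ≥ 1 and d ≥ 1, let r be a designated element of Fin (2*m), and define S : Finset (Fin (2*m)) → ℝ by S X = (min |X| (2*m − |X|)) · Real.log d (the entropy profile of an AME(2m,d) state). Then for every A ⊆ Fin (2*m) with r ∉ A: if |A| ≥ m then S {r} + S A − S (A ∪ {r}) = 2 · Real.log d, and if |A| ≤ m−1 then S {r} + S A − S (A ∪ {r}) = 0. (This is the direction of Theorem 3 asserting that an AME(2m,d) state, with one party viewed as the reference system, satisfies the mutual-information conditions of an ((m, 2m−1)) threshold quantum secret sharing scheme with share and secret dimension d.) -/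
/-!
Write `k = |A|`. Adding the reference party to `A` raises `min(k, 2m - k)` by one while
`k < m`, and lowers it by one once `k ≥ m`. As `S {r} = log d`, the mutual information
`S {r} + S A - S (A ∪ {r})` is therefore `(1 - 1) log d` below the threshold and
`(1 + 1) log d` above it.
-/

theorem min_sub_add_min_sub_eq_of_lt {m k : ℕ} (hkm : k < m) :
    min 1 (2 * m - 1) + min k (2 * m - k) = min (k + 1) (2 * m - (k + 1)) := by
  omega

theorem min_sub_add_min_sub_eq_of_le {m k : ℕ} (hmk : m ≤ k) (hk : k + 1 ≤ 2 * m) :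
    min 1 (2 * m - 1) + min k (2 * m - k) = min (k + 1) (2 * m - (k + 1)) + 2 := by
  omega

theorem card_union_singleton_of_notMem {α : Type*} [DecidableEq α] {A : Finset α} {r : α}
    (hr : r ∉ A) : (A ∪ {r}).card = A.card + 1 := by
  rw [Finset.union_singleton, Finset.card_insert_of_notMem hr]

theorem mutualInfo_singleton_eq_of_entropy_eq_min {m : ℕ} {S : Finset (Fin (2 * m)) → ℝ}
    {c : ℝ} (hS : ∀ X : Finset (Fin (2 * m)), S X = ((min X.card (2 * m - X.card) : ℕ) : ℝ) * c)
    {A : Finset (Fin (2 * m))} {r : Fin (2 * m)} (hr : r ∉ A) :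
    S {r} + S A - S (A ∪ {r}) =
      (((min 1 (2 * m - 1) + min A.card (2 * m - A.card) : ℕ) : ℝ) -
        ((min (A.card + 1) (2 * m - (A.card + 1)) : ℕ) : ℝ)) * c := by
  rw [hS, hS, hS, card_union_singleton_of_notMem hr, Finset.card_singleton]
  push_cast
  ring

theorem AME_is_qss_general (m d : ℕ) (r : Fin (2 * m))
    (S : Finset (Fin (2 * m)) → ℝ)
    (hS : ∀ X : Finset (Fin (2 * m)),
      S X = ((min X.card (2 * m - X.card) : ℕ) : ℝ) * Real.log d) :
    ∀ A : Finset (Fin (2 * m)), r ∉ A →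
      (m ≤ A.card → S {r} + S A - S (A ∪ {r}) = 2 * Real.log d) ∧
      (A.card ≤ m - 1 → S {r} + S A - S (A ∪ {r}) = 0) := by
  intro A hr
  have hk : A.card + 1 ≤ 2 * m := by
    rw [← card_union_singleton_of_notMem hr]
    exact (A ∪ {r}).card_le_univ.trans_eq (Fintype.card_fin _)
  rw [mutualInfo_singleton_eq_of_entropy_eq_min hS hr]
  constructor
  · intro hmk
    rw [min_sub_add_min_sub_eq_of_le hmk hk]
    push_cast
    ring
  · intro hkm
    rw [min_sub_add_min_sub_eq_of_lt (by omega)]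
    simp

/-- **AME states give threshold QSS schemes (entropy content).**
An AME(2m,d) state has entropy profile `S X = min(|X|, 2m−|X|) · log d`.  Viewing one
party `r` as the reference system, the mutual information `I(r:A) = S(r)+S(A)−S(A∪{r})`
equals `2 log d` for every set `A` of at least `m` of the other parties (authorized
sets can recover the secret), and `0` for every set of at most `m−1` of the other
parties (unauthorized sets have no information).  These are exactly the conditions
of an `((m, 2m−1))` threshold QSS scheme with share and secret dimension `d`. -/
theorem AME_is_qss (m d : ℕ) (hm : 1 ≤ m) (hd : 1 ≤ d) (r : Fin (2 * m))
    (S : Finset (Fin (2 * m)) → ℝ)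
    (hS : ∀ X : Finset (Fin (2 * m)),
      S X = ((min X.card (2 * m - X.card) : ℕ) : ℝ) * Real.log d) :
    ∀ A : Finset (Fin (2 * m)), r ∉ A →
      (m ≤ A.card → S {r} + S A - S (A ∪ {r}) = 2 * Real.log d) ∧
      (A.card ≤ m - 1 → S {r} + S A - S (A ∪ {r}) = 0) :=
  AME_is_qss_general m d r S hS
end

section
/- Let m ≥ 1 and 1 ≤ L ≤ m, let the ground type be Option (Fin (2*m − L)) with r = none the reference symbol and the elements some i the 2m−L players, and let s : ℝ. Suppose S : Finset (Option (Fin (2*m − L))) → ℝ satisfies: S ∅ = 0; S {some i} = s for every player i; S {r} = L · s; subadditivity, S (X ∪ Y) ≤ S X + S Y for disjoint X, Y; the Araki–Lieb inequality, S (X ∪ Y) ≥ S X − S Y for disjoint X, Y; strong subadditivity (submodularity), S (X ∪ Y) + S (X ∩ Y) ≤ S X + S Y for all X, Y; the authorized-set condition, S (A ∪ {r}) = S A − L·s for every set A of players with |A| ≥ m; and the forbidden-set condition, S (B ∪ {r}) = S B + L·s for every set B of players with |B| ≤ m − L. Then S A = |A| · s for every set A of players with |A| ≤ m. (This is the entropy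 content of the direction of the ramp theorem asserting that the purification of a (m, L, 2m−L) ramp quantum secret sharing scheme with share dimension d and secret dimension d^L is maximally entangled across every bipartition that keeps the L reference qudits together, taking s = log d.) -/
set_option maxHeartbeats 2000000 in
/-- **Ramp QSS schemes purify to maximally entangled states (entropy content).**
The ground type is `Option (Fin (2*m − L))`: the `2m−L` players are `some i`, and
`none` is the reference symbol `r` (carrying the `L` reference qudits).  If the
entropy function `S` satisfies the standard entropy inequalities, `S {some i} = s`,
`S {r} = L·s`, `S ∅ = 0`, and the authorized/forbidden conditions of a
`(m, L, 2m−L)` ramp QSS scheme, then every set of at most `m` players has maximal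
entropy `|A| · s`.  With `s = log d` this says the purification is maximally
entangled across every bipartition keeping the reference qudits together. -/
theorem ramp_qss_purification_maximally_entangled (m L : ℕ)
    (hm : 1 ≤ m) (hL : 1 ≤ L) (hLm : L ≤ m) (s : ℝ)
    (S : Finset (Option (Fin (2 * m - L))) → ℝ)
    (hempty : S ∅ = 0)
    (hsingle : ∀ i : Fin (2 * m - L), S {some i} = s)
    (href : S {none} = (L : ℝ) * s)
    (hsubadd : ∀ X Y : Finset (Option (Fin (2 * m - L))), Disjoint X Y →
      S (X ∪ Y) ≤ S X + S Y)
    (hAL : ∀ X Y : Finset (Option (Fin (2 * m - L))), Disjoint X Y →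
      S X - S Y ≤ S (X ∪ Y))
    (hSSA : ∀ X Y : Finset (Option (Fin (2 * m - L))),
      S (X ∪ Y) + S (X ∩ Y) ≤ S X + S Y)
    (hauth : ∀ A : Finset (Option (Fin (2 * m - L))), none ∉ A → m ≤ A.card →
      S (A ∪ {none}) = S A - (L : ℝ) * s)
    (hforb : ∀ B : Finset (Option (Fin (2 * m - L))), none ∉ B → B.card ≤ m - L →
      S (B ∪ {none}) = S B + (L : ℝ) * s) :
    ∀ A : Finset (Option (Fin (2 * m - L))), none ∉ A → A.card ≤ m →
      S A = (A.card : ℝ) * s := by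
  -- subadditivity with a singleton share
  have hsub1 : ∀ (D : Finset (Option (Fin (2 * m - L)))) (i : Fin (2 * m - L)),
      some i ∉ D → S (D ∪ {some i}) ≤ S D + s := by
    intro D i h
    have := hsubadd D {some i} (by simp [h])
    rwa [hsingle] at this
  -- Araki-Lieb with a singleton share
  have hAL1 : ∀ (D : Finset (Option (Fin (2 * m - L)))) (i : Fin (2 * m - L)),
      some i ∉ D → S D - s ≤ S (D ∪ {some i}) := by
    intro D i h
    have := hAL D {some i} (by simp [h])
    rwa [hsingle] at this
  -- one step: g := S(·) - S(· ∪ {r}) increases by at most 2s when adding a share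
  have hstep : ∀ (D : Finset (Option (Fin (2 * m - L)))) (i : Fin (2 * m - L)),
      none ∉ D → some i ∉ D →
      S (D ∪ {some i}) - S ((D ∪ {some i}) ∪ {none}) ≤
        (S D - S (D ∪ {none})) + 2 * s := by
    intro D i hD hiD
    have h1 := hsub1 D i hiD
    have h2 : S (D ∪ {none}) - s ≤ S ((D ∪ {none}) ∪ {some i}) :=
      hAL1 (D ∪ {none}) i (by simp [hiD])
    have he : (D ∪ {some i}) ∪ {none} = (D ∪ {none}) ∪ {some i} := by
      ext x; simp; tauto
    rw [he]; linarith
  -- chain version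
  have hchain : ∀ (E D : Finset (Option (Fin (2 * m - L)))),
      none ∉ D → none ∉ E → Disjoint D E →
      S (D ∪ E) - S ((D ∪ E) ∪ {none}) ≤
        (S D - S (D ∪ {none})) + 2 * (E.card : ℝ) * s := by
    intro E
    induction E using Finset.induction_on with
    | empty => intro D hD _ _; simp
    | @insert a E' ha ih =>
      intro D hD hnE hdisj
      obtain ⟨i, rfl⟩ : ∃ i, a = some i := by
        cases a with
        | none => exact absurd (Finset.mem_insert_self _ _) hnE
        | some i => exact ⟨i, rfl⟩
      have hnE' : none ∉ E' := fun h => hnE (Finset.mem_insert_of_mem h)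
      have hdisj' : Disjoint D E' := hdisj.mono_right (Finset.subset_insert _ _)
      have hiD : some i ∉ D := fun h =>
        (Finset.disjoint_left.mp hdisj h) (Finset.mem_insert_self _ _)
      have hiDE : some i ∉ D ∪ E' := by simp [hiD, ha]
      have he : D ∪ insert (some i) E' = (D ∪ E') ∪ {some i} := by
        ext x; simp
      have h1 := hstep (D ∪ E') i (by simp [hD, hnE']) hiDE
      have h2 := ih D hD hnE' hdisj'
      have hcard : ((insert (some i) E').card : ℝ) = (E'.card : ℝ) + 1 := by
        rw [Finset.card_insert_of_notMem ha]; push_cast; ring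
      rw [he, hcard]; linarith
  -- player universe
  have hUcard : (Finset.univ.erase (none : Option (Fin (2 * m - L)))).card
      = 2 * m - L := by
    rw [Finset.card_erase_of_mem (Finset.mem_univ _), Finset.card_univ]
    simp
  -- exact value of g on sets of size between m-L and m
  have hg : ∀ C : Finset (Option (Fin (2 * m - L))), none ∉ C →
      m - L ≤ C.card → C.card ≤ m →
      S C - S (C ∪ {none}) = (2 * (C.card : ℝ) - 2 * m + L) * s := by
    intro C hC h1 h2
    -- upper bound via a forbidden subset
    obtain ⟨B, hBC, hBcard⟩ := Finset.exists_subset_card_eq h1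
    have hBnone : none ∉ B := fun h => hC (hBC h)
    have hforbB := hforb B hBnone (le_of_eq hBcard)
    have hnsd : none ∉ C \ B := fun h => hC (Finset.mem_sdiff.mp h).1
    have hupper := hchain (C \ B) B hBnone hnsd Finset.disjoint_sdiff
    rw [Finset.union_sdiff_of_subset hBC, hforbB] at hupper
    have hcardE : ((C \ B).card : ℝ) = (C.card : ℝ) - ((m : ℝ) - (L : ℝ)) := by
      have h : (C \ B).card + m = C.card + L := by
        rw [Finset.card_sdiff_of_subset hBC, hBcard]; omega
      have := congrArg (Nat.cast : ℕ → ℝ) h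
      push_cast at this; linarith
    rw [hcardE] at hupper
    -- lower bound via an authorized superset
    have hCU : C ⊆ Finset.univ.erase (none : Option (Fin (2 * m - L))) := by
      intro x hx
      exact Finset.mem_erase.mpr ⟨fun h => hC (h ▸ hx), Finset.mem_univ _⟩
    obtain ⟨A, hCA, hAU, hAcard⟩ :=
      Finset.exists_subsuperset_card_eq hCU h2 (by rw [hUcard]; omega)
    have hAnone : none ∉ A := fun h => (Finset.mem_erase.mp (hAU h)).1 rfl
    have hauthA := hauth A hAnone (le_of_eq hAcard.symm)
    have hnsd' : none ∉ A \ C := fun h => hAnone (Finset.mem_sdiff.mp h).1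
    have hlower := hchain (A \ C) C hC hnsd' Finset.disjoint_sdiff
    rw [Finset.union_sdiff_of_subset hCA, hauthA] at hlower
    have hcardE' : ((A \ C).card : ℝ) = (m : ℝ) - (C.card : ℝ) := by
      have h : (A \ C).card + C.card = m := by
        rw [Finset.card_sdiff_of_subset hCA, hAcard]; omega
      have := congrArg (Nat.cast : ℕ → ℝ) h
      push_cast at this; linarith
    rw [hcardE'] at hlower
    ring_nf at hupper hlower ⊢
    linarith
  -- exact step for sets of size between m-L and m-1
  have hstep1 : ∀ (C : Finset (Option (Fin (2 * m - L)))) (i : Fin (2 * m - L)),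
      none ∉ C → m - L ≤ C.card → C.card + 1 ≤ m → some i ∉ C →
      S (C ∪ {some i}) = S C + s := by
    intro C i hC h1 h2 hiC
    have hins : C ∪ {some i} = insert (some i) C := by
      ext x; simp
    have hcardCi : (C ∪ {some i}).card = C.card + 1 := by
      rw [hins, Finset.card_insert_of_notMem hiC]
    have hg1 := hg C hC h1 (by omega)
    have hg2 := hg (C ∪ {some i}) (by simp [hC])
      (by rw [hcardCi]; omega) (by rw [hcardCi]; omega)
    rw [hcardCi] at hg2
    have hup := hsub1 C i hiC
    have hdown : S (C ∪ {none}) - s ≤ S ((C ∪ {none}) ∪ {some i}) :=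
      hAL1 (C ∪ {none}) i (by simp [hiC])
    have he : (C ∪ {some i}) ∪ {none} = (C ∪ {none}) ∪ {some i} := by
      ext x; simp; tauto
    rw [he] at hg2
    push_cast at hg2
    ring_nf at hg1 hg2
    nlinarith [hg1, hg2, hup, hdown]
  -- exact step for all sets of size < m
  have hstepAll : ∀ (B : Finset (Option (Fin (2 * m - L)))) (i : Fin (2 * m - L)),
      none ∉ B → B.card + 1 ≤ m → some i ∉ B → S (B ∪ {some i}) = S B + s := by
    intro B i hB hcard hiB
    rcases le_or_gt (m - L) B.card with hge | hlt
    · exact hstep1 B i hB hge hcard hiB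
    · have hBU : B ⊆ (Finset.univ.erase
          (none : Option (Fin (2 * m - L)))).erase (some i) := by
        intro x hx
        exact Finset.mem_erase.mpr ⟨fun h => hiB (h ▸ hx),
          Finset.mem_erase.mpr ⟨fun h => hB (h ▸ hx), Finset.mem_univ _⟩⟩
      have hU'card : ((Finset.univ.erase
          (none : Option (Fin (2 * m - L)))).erase (some i)).card
          = 2 * m - L - 1 := by
        rw [Finset.card_erase_of_mem (Finset.mem_erase.mpr
          ⟨by simp, Finset.mem_univ _⟩), hUcard]
      obtain ⟨C, hBC, hCU, hCcard⟩ :=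
        Finset.exists_subsuperset_card_eq hBU (le_of_lt hlt)
          (by rw [hU'card]; omega)
      have hiC : some i ∉ C := fun h => (Finset.mem_erase.mp (hCU h)).1 rfl
      have hCnone : none ∉ C := fun h =>
        (Finset.mem_erase.mp (Finset.mem_erase.mp (hCU h)).2).1 rfl
      have hCs := hstep1 C i hCnone (le_of_eq hCcard.symm) (by omega) hiC
      have hU : (B ∪ {some i}) ∪ C = C ∪ {some i} := by
        ext x
        simp only [Finset.mem_union, Finset.mem_singleton]
        constructor
        · rintro ((h | h) | h)
          · exact Or.inl (hBC h)
          · exact Or.inr h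
          · exact Or.inl h
        · rintro (h | h)
          · exact Or.inr h
          · exact Or.inl (Or.inr h)
      have hI : (B ∪ {some i}) ∩ C = B := by
        ext x
        simp only [Finset.mem_inter, Finset.mem_union, Finset.mem_singleton]
        constructor
        · rintro ⟨h | h, hC⟩
          · exact h
          · exact absurd (h ▸ hC) hiC
        · intro h; exact ⟨Or.inl h, hBC h⟩
      have hssa := hSSA (B ∪ {some i}) C
      rw [hU, hI, hCs] at hssa
      have hup := hsub1 B i hiB
      linarith
  -- final induction
  intro A
  induction A using Finset.induction_on with
  | empty => intro _ _; simp [hempty]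
  | @insert a A' ha ih =>
    intro hnone hcard
    obtain ⟨i, rfl⟩ : ∃ i, a = some i := by
      cases a with
      | none => exact absurd (Finset.mem_insert_self _ _) hnone
      | some i => exact ⟨i, rfl⟩
    have hnA' : none ∉ A' := fun h => hnone (Finset.mem_insert_of_mem h)
    have hcard' : A'.card + 1 ≤ m := by
      rwa [Finset.card_insert_of_notMem ha] at hcard
    have hstepA := hstepAll A' i hnA' hcard' ha
    have heq : insert (some i) A' = A' ∪ {some i} := by
      ext x; simp
    rw [heq, hstepA, ih hnA' (by omega), ← heq,
      Finset.card_insert_of_notMem ha]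
    push_cast; ring
end

section
/- Let m ≥ 1, 1 ≤ L ≤ m, and d ≥ 1. Let the ground type be Option (Fin (2*m − L)) with r = none the reference symbol, and define the weight w(X) = |X ∩ players| + L·(if r ∈ X then 1 else 0) and the entropy profile S X = (min (w X) (2*m − w X)) · Real.log d (the entropies of a 2m-qudit state maximally entangled across every bipartition keeping the L reference qudits together, with R counted as L qudits). Then for every set A of players: if |A| ≥ m then S {r} + S A − S (A ∪ {r}) = 2·L·Real.log d, and if |A| ≤ m − L then S {r} + S A − S (A ∪ {r}) = 0. (This is the direction of the ramp theorem asserting that such a maximally entangled state is the purification of a (m, L, 2m−L) ramp quantum secret sharing scheme with secret dimension d^L and share dimension d.) -/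
/-- **Maximally entangled states give ramp QSS schemes (entropy content).**
The ground type is `Option (Fin (2*m − L))`: the `2m−L` players are `some i`, and
`none` is the reference symbol `r`, which counts as `L` qudits.  The weight
`w X = |X ∩ players| + L·[r ∈ X]` counts the qudits of `X`, and a `2m`-qudit state
maximally entangled across every bipartition keeping the `L` reference qudits
together has entropy profile `S X = min(w X, 2m − w X) · log d`.  Then for every set
`A` of players, the mutual information `I(r:A) = S(r)+S(A)−S(A ∪ {r})` equals
`2L log d` if `|A| ≥ m` (authorized) and `0` if `|A| ≤ m−L` (forbidden), which are
the conditions of a `(m, L, 2m−L)` ramp QSS scheme with secret dimension `d^L`. -/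
theorem maximally_entangled_is_ramp_qss (m L d : ℕ)
    (hm : 1 ≤ m) (hL : 1 ≤ L) (hLm : L ≤ m) (hd : 1 ≤ d)
    (w : Finset (Option (Fin (2 * m - L))) → ℕ)
    (hw : ∀ X : Finset (Option (Fin (2 * m - L))),
      w X = (X.erase none).card + L * (if none ∈ X then 1 else 0))
    (S : Finset (Option (Fin (2 * m - L))) → ℝ)
    (hS : ∀ X : Finset (Option (Fin (2 * m - L))),
      S X = ((min (w X) (2 * m - w X) : ℕ) : ℝ) * Real.log d) :
    ∀ A : Finset (Option (Fin (2 * m - L))), none ∉ A →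
      (m ≤ A.card → S {none} + S A - S (A ∪ {none}) = 2 * (L : ℝ) * Real.log d) ∧
      (A.card ≤ m - L → S {none} + S A - S (A ∪ {none}) = 0) := by
  intro A hA
  have hw1 : w {none} = L := by simp [hw]
  have hwA : w A = A.card := by
    rw [hw, Finset.erase_eq_of_notMem hA, if_neg hA]; ring
  have hU : A ∪ {none} = insert none A := by
    rw [Finset.union_comm]; rfl
  have hwU : w (A ∪ {none}) = A.card + L := by
    rw [hw, hU, Finset.erase_insert hA, if_pos (Finset.mem_insert_self _ _)]; ring
  have hcard : A.card ≤ 2 * m - L := by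
    have hsub : A ⊆ Finset.univ.erase none := fun x hx =>
      Finset.mem_erase.2 ⟨by rintro rfl; exact hA hx, Finset.mem_univ x⟩
    have := Finset.card_le_card hsub
    simpa [Finset.card_erase_of_mem, Fintype.card_option] using this
  set a := A.card with ha
  constructor
  · intro hma
    have h1 : min L (2 * m - L) = L := by omega
    have h2 : min a (2 * m - a) = 2 * m - a := by omega
    have h3 : min (a + L) (2 * m - (a + L)) = 2 * m - (a + L) := by omega
    rw [hS, hS, hS, hw1, hwA, hwU, h1, h2, h3]
    have c1 : ((2 * m - a : ℕ) : ℝ) = 2 * m - a := by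
      push_cast [Nat.cast_sub (by omega : a ≤ 2 * m)]; ring
    have c2 : ((2 * m - (a + L) : ℕ) : ℝ) = 2 * m - (a + L) := by
      push_cast [Nat.cast_sub (by omega : a + L ≤ 2 * m)]; ring
    rw [c1, c2]; push_cast; ring
  · intro hma
    have h1 : min L (2 * m - L) = L := by omega
    have h2 : min a (2 * m - a) = a := by omega
    have h3 : min (a + L) (2 * m - (a + L)) = a + L := by omega
    rw [hS, hS, hS, hw1, hwA, hwU, h1, h2, h3]
    push_cast; ring
end

section
/- Let α be a type, s : ℝ, and S : Finset α → ℝ a submodular function, i.e. S (X ∪ Y) + S (X ∩ Y) ≤ S X + S Y for all finsets X, Y, such that moreover S (insert i X) ≤ S X + s for every finset X and every i ∉ X. Suppose B and C are disjoint finsets with S (B ∪ C) = S B + |C| · s. Then for every finset X ⊆ B and every i ∈ C, S (insert i X) = S X + s. (This is the combinatorial core of the proofs of the AME–QSS equivalence theorems: if adding a block of shares increases the entropy maximally, then adding any single one of those shares to any smaller set also increases the entropy maximally.) -/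
private lemma aux_block_bound {α : Type*} [DecidableEq α] (s : ℝ) (S : Finset α → ℝ)
    (hstep : ∀ (X : Finset α) (i : α), i ∉ X → S (insert i X) ≤ S X + s) :
    ∀ (E B' : Finset α), Disjoint B' E → S (B' ∪ E) ≤ S B' + (E.card : ℝ) * s := by
  intro E
  induction E using Finset.induction_on with
  | empty => intro B' _; simp
  | @insert a E ha ih =>
    intro B' hd
    have hd' : Disjoint B' E := hd.mono_right (Finset.subset_insert a E)
    have haB : a ∉ B' ∪ E := by
      simp only [Finset.mem_union, not_or]
      exact ⟨fun h => (Finset.disjoint_left.mp hd) h (Finset.mem_insert_self a E), ha⟩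
    have h1 : B' ∪ insert a E = insert a (B' ∪ E) := by
      ext x; simp [Finset.mem_insert, Finset.mem_union]
    rw [h1]
    calc S (insert a (B' ∪ E)) ≤ S (B' ∪ E) + s := hstep _ _ haB
      _ ≤ S B' + (E.card : ℝ) * s + s := by linarith [ih B' hd']
      _ = S B' + ((insert a E).card : ℝ) * s := by
          rw [Finset.card_insert_of_notMem ha]; push_cast; ring

/-- **Combinatorial core of the AME–QSS equivalence proofs.**
Let `S` be a submodular set function such that adding any single element to any set
increases `S` by at most `s`.  If adding a whole block `C` of shares to `B`
increases the entropy maximally, `S (B ∪ C) = S B + |C|·s`, then adding any single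
share `i ∈ C` to any subset `X ⊆ B` also increases the entropy maximally,
`S (insert i X) = S X + s`. -/
theorem submodular_block_increase_maximal {α : Type*} [DecidableEq α] (s : ℝ)
    (S : Finset α → ℝ)
    (hSSA : ∀ X Y : Finset α, S (X ∪ Y) + S (X ∩ Y) ≤ S X + S Y)
    (hstep : ∀ (X : Finset α) (i : α), i ∉ X → S (insert i X) ≤ S X + s)
    (B C : Finset α) (hdisj : Disjoint B C)
    (hBC : S (B ∪ C) = S B + (C.card : ℝ) * s) :
    ∀ X ⊆ B, ∀ i ∈ C, S (insert i X) = S X + s := by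
  intro X hX i hi
  have hiB : i ∉ B := Finset.disjoint_right.mp hdisj hi
  have hiX : i ∉ X := fun h => hiB (hX h)
  -- Step 1: S (insert i B) = S B + s
  have hunion : B ∪ C = insert i B ∪ C.erase i := by
    ext x
    simp only [Finset.mem_union, Finset.mem_insert, Finset.mem_erase]
    constructor
    · rintro (h | h)
      · exact Or.inl (Or.inr h)
      · by_cases hx : x = i
        · exact Or.inl (Or.inl hx)
        · exact Or.inr ⟨hx, h⟩
    · rintro ((rfl | h) | ⟨_, h⟩)
      · exact Or.inr hi
      · exact Or.inl h
      · exact Or.inr h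
  have hd2 : Disjoint (insert i B) (C.erase i) := by
    rw [Finset.disjoint_left]
    intro x hx hx2
    rcases Finset.mem_insert.mp hx with rfl | hx
    · exact (Finset.mem_erase.mp hx2).1 rfl
    · exact Finset.disjoint_left.mp hdisj hx (Finset.mem_erase.mp hx2).2
  have hcard : (C.card : ℝ) = ((C.erase i).card : ℝ) + 1 := by
    rw [Finset.card_erase_of_mem hi]
    have : 1 ≤ C.card := Finset.card_pos.mpr ⟨i, hi⟩
    push_cast [Nat.cast_sub this]
    ring
  have h1 : S (B ∪ C) ≤ S (insert i B) + ((C.erase i).card : ℝ) * s := by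
    rw [hunion]
    exact aux_block_bound s S hstep _ _ hd2
  have h2 : S (insert i B) ≤ S B + s := hstep B i hiB
  have hIB : S (insert i B) = S B + s := by
    rw [hBC, hcard] at h1; nlinarith
  -- Step 2: submodularity with B and insert i X
  have hU : B ∪ insert i X = insert i B := by
    ext x
    simp only [Finset.mem_union, Finset.mem_insert]
    constructor
    · rintro (h | rfl | h)
      · exact Or.inr h
      · exact Or.inl rfl
      · exact Or.inr (hX h)
    · rintro (rfl | h)
      · exact Or.inr (Or.inl rfl)
      · exact Or.inl h
  have hI : B ∩ insert i X = X := by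
    ext x
    simp only [Finset.mem_inter, Finset.mem_insert]
    constructor
    · rintro ⟨hB, rfl | hx⟩
      · exact absurd hB hiB
      · exact hx
    · intro hx; exact ⟨hX hx, Or.inr hx⟩
  have := hSSA B (insert i X)
  rw [hU, hI, hIB] at this
  have h3 := hstep X i hiX
  linarith
end

section
/- Let N ≥ 1, V = (Fin N → ℂ), vec M = ∑ i, (e i) ⊗ₜ (M.mulVec (e i)) ∈ V ⊗[ℂ] V for a matrix M, and β : V ⊗[ℂ] V →ₗ[ℂ] ℂ the linear map with β (x ⊗ₜ y) = ∑ k, x k * y k. Define the linear map T_U : V ⊗[ℂ] V →ₗ[ℂ] V ⊗[ℂ] V by T_U x = (id_V ⊗ β ⊗ id_V)(x ⊗ (vec U)) (with the canonical associativity identifications), i.e. Bell contraction with one further copy of vec U. If U is symmetric, Uᵀ = U, then for every m ≥ 1, T_U^[m−1] (vec U) = vec (U ^ m). (This is Lemma: if each of m groups of parties shares the state ∑ᵢ |i⟩ U|i⟩ arranged in a chain, then after Bell measurements on all intermediate parties the two end groups share, up to local equivalence, the state ∑ᵢ |i⟩ U^m |i⟩.) -/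
open scoped TensorProduct
open Matrix

/-- The unnormalized maximally entangled vector `∑ᵢ |i⟩ ⊗ M|i⟩` associated to a
matrix `M`, an element of `V ⊗ V` with `V = Fin N → ℂ`. -/
noncomputable def vecState {N : ℕ} (M : Matrix (Fin N) (Fin N) ℂ) :
    (Fin N → ℂ) ⊗[ℂ] (Fin N → ℂ) :=
  ∑ i : Fin N, (Pi.single i (1 : ℂ)) ⊗ₜ[ℂ] (M.mulVec (Pi.single i (1 : ℂ)))

/-- The map `id_V ⊗ β ⊗ id_V : (V ⊗ V) ⊗ (V ⊗ V) → V ⊗ V` (via the canonical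
associativity isomorphisms of the fourfold tensor product) that contracts the
middle two factors with the Bell projection `β`. -/
noncomputable def midContract (N : ℕ)
    (β : (Fin N → ℂ) ⊗[ℂ] (Fin N → ℂ) →ₗ[ℂ] ℂ) :
    ((Fin N → ℂ) ⊗[ℂ] (Fin N → ℂ)) ⊗[ℂ] ((Fin N → ℂ) ⊗[ℂ] (Fin N → ℂ)) →ₗ[ℂ]
      (Fin N → ℂ) ⊗[ℂ] (Fin N → ℂ) :=
  (TensorProduct.map LinearMap.id (TensorProduct.lid ℂ (Fin N → ℂ)).toLinearMap) ∘ₗ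
    (TensorProduct.map LinearMap.id (TensorProduct.map β LinearMap.id)) ∘ₗ
      ((TensorProduct.assoc ℂ (Fin N → ℂ) (Fin N → ℂ)
          ((Fin N → ℂ) ⊗[ℂ] (Fin N → ℂ))).trans
        (TensorProduct.congr (LinearEquiv.refl ℂ (Fin N → ℂ))
          (TensorProduct.assoc ℂ (Fin N → ℂ) (Fin N → ℂ) (Fin N → ℂ)).symm)).toLinearMap

/-- Bell contraction with one further copy of `vec U`:
`T_U x = (id ⊗ β ⊗ id)(x ⊗ vec U)`. -/
noncomputable def bellStep (N : ℕ)
    (β : (Fin N → ℂ) ⊗[ℂ] (Fin N → ℂ) →ₗ[ℂ] ℂ)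
    (U : Matrix (Fin N) (Fin N) ℂ) :
    (Fin N → ℂ) ⊗[ℂ] (Fin N → ℂ) →ₗ[ℂ] (Fin N → ℂ) ⊗[ℂ] (Fin N → ℂ) :=
  (midContract N β) ∘ₗ
    ((TensorProduct.mk ℂ ((Fin N → ℂ) ⊗[ℂ] (Fin N → ℂ))
        ((Fin N → ℂ) ⊗[ℂ] (Fin N → ℂ))).flip (vecState U))

/-- **Entanglement swapping along a chain of AME states (symmetric case).**
If `m` groups of parties arranged in a chain each share the state `∑ᵢ |i⟩ U|i⟩`
with `U` symmetric, then after Bell measurements on all intermediate parties the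
two end groups share the state `∑ᵢ |i⟩ U^m|i⟩`. -/
theorem bellStep_iterate_vecState_of_symm (N : ℕ) (hN : 1 ≤ N)
    (β : (Fin N → ℂ) ⊗[ℂ] (Fin N → ℂ) →ₗ[ℂ] ℂ)
    (hβ : ∀ x y : Fin N → ℂ, β (x ⊗ₜ[ℂ] y) = ∑ k : Fin N, x k * y k)
    (U : Matrix (Fin N) (Fin N) ℂ) (hU : Uᵀ = U)
    (m : ℕ) (hm : 1 ≤ m) :
    (⇑(bellStep N β U))^[m - 1] (vecState U) = vecState (U ^ m) := by
  classical
  have key : ∀ M : Matrix (Fin N) (Fin N) ℂ,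
      bellStep N β U (vecState M) = vecState (U * M) := by
    intro M
    have e : ∀ (i j : Fin N),
        (midContract N β)
          (((Pi.single i (1:ℂ)) ⊗ₜ[ℂ] (M.mulVec (Pi.single i 1))) ⊗ₜ[ℂ]
            ((Pi.single j (1:ℂ)) ⊗ₜ[ℂ] (U.mulVec (Pi.single j 1)))) =
        (Pi.single i (1:ℂ)) ⊗ₜ[ℂ]
          ((M.mulVec (Pi.single i 1)) j • U.mulVec (Pi.single j 1)) := by
      intro i j
      simp [midContract, hβ, Matrix.mulVec_single, TensorProduct.smul_tmul,
        TensorProduct.tmul_smul, mul_comm, Pi.single_apply, mul_ite, ite_mul,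
        mul_one, mul_zero, one_mul, zero_mul, Matrix.mulVec, dotProduct]
    simp only [bellStep, LinearMap.comp_apply, LinearMap.flip_apply,
      TensorProduct.mk_apply]
    rw [show (vecState M) ⊗ₜ[ℂ] (vecState U)
        = ∑ i : Fin N, ∑ j : Fin N,
          (((Pi.single i (1:ℂ)) ⊗ₜ[ℂ] (M.mulVec (Pi.single i 1))) ⊗ₜ[ℂ]
            ((Pi.single j (1:ℂ)) ⊗ₜ[ℂ] (U.mulVec (Pi.single j 1)))) by
      simp only [vecState, TensorProduct.sum_tmul, TensorProduct.tmul_sum]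
      rw [Finset.sum_comm]]
    rw [map_sum]
    simp only [map_sum, e]
    unfold vecState
    refine Finset.sum_congr rfl fun i _ => ?_
    rw [← TensorProduct.tmul_sum]
    congr 1
    ext l
    simp [Matrix.mulVec, dotProduct, Matrix.mul_apply, Finset.mul_sum,
      Finset.sum_mul, mul_comm, Pi.single_apply, mul_ite, ite_mul,
      mul_one, mul_zero, one_mul, zero_mul, mul_assoc]
  obtain ⟨k, rfl⟩ : ∃ k, m = k + 1 := ⟨m - 1, (Nat.succ_pred_eq_of_pos hm).symm⟩
  simp only [Nat.add_sub_cancel]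
  induction k with
  | zero => simp [pow_one]
  | succ n ih =>
      rw [Function.iterate_succ_apply', ih (by omega), key, ← pow_succ']
end

section
/- Let m ≥ 1, let r be a designated element of Fin (2*m), and let s : ℝ. Suppose S : Finset (Fin (2*m)) → ℝ satisfies: S {i} = s for every i; subadditivity, S (X ∪ Y) ≤ S X + S Y for disjoint X, Y; the Araki–Lieb inequality, S (X ∪ Y) ≥ S X − S Y for disjoint X, Y; S (A ∪ {r}) = S A − s for every A with r ∉ A and |A| ≥ m; and S (B ∪ {r}) = S B + s for every B with r ∉ B and |B| ≤ m−1. Then for every B ⊆ Fin (2*m) with r ∉ B and |B| = m−1, and every i ∉ B ∪ {r}, S (insert i B) = S B + s. (This is the key intermediate step in the proof that a threshold QSS scheme purifies to an AME state: adding any one share to any m−1 shares increases the entropy maximally.) -/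
/-- **Key step of the QSS → AME direction.**
In an `((m, 2m−1))` threshold QSS scheme (entropies abstracted as a set function `S`
on the `2m` parties, the players plus the reference `r`, satisfying subadditivity,
Araki–Lieb, and the authorized/unauthorized conditions with `S({i}) = s` for all
singletons), adding any one share `i` to any set `B` of `m−1` shares increases the
entropy maximally: `S(B ∪ {i}) = S(B) + s`. -/
theorem qss_add_share_maximal (m : ℕ) (hm : 1 ≤ m) (r : Fin (2 * m)) (s : ℝ)
    (S : Finset (Fin (2 * m)) → ℝ)
    (hsingle : ∀ i : Fin (2 * m), S {i} = s)
    (hsubadd : ∀ X Y : Finset (Fin (2 * m)), Disjoint X Y → S (X ∪ Y) ≤ S X + S Y)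
    (hAL : ∀ X Y : Finset (Fin (2 * m)), Disjoint X Y → S X - S Y ≤ S (X ∪ Y))
    (hauth : ∀ A : Finset (Fin (2 * m)), r ∉ A → m ≤ A.card →
      S (A ∪ {r}) = S A - s)
    (hunauth : ∀ B : Finset (Fin (2 * m)), r ∉ B → B.card ≤ m - 1 →
      S (B ∪ {r}) = S B + s) :
    ∀ B : Finset (Fin (2 * m)), r ∉ B → B.card = m - 1 →
      ∀ i : Fin (2 * m), i ∉ B ∪ {r} → S (insert i B) = S B + s := by
  intro B hrB hcard i hi
  simp only [Finset.mem_union, Finset.mem_singleton, not_or] at hi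
  obtain ⟨hiB, hir⟩ := hi
  have hdisjBi : Disjoint B ({i} : Finset (Fin (2 * m))) := by
    simp [Finset.disjoint_singleton_right, hiB]
  have hBi : insert i B = B ∪ {i} := by
    ext x; simp [or_comm]
  -- upper bound
  have hub : S (B ∪ {i}) ≤ S B + s := by
    have := hsubadd B {i} hdisjBi
    rwa [hsingle i] at this
  -- authorized condition on B ∪ {i}
  have hrBi : r ∉ B ∪ {i} := by
    simp [hrB, Ne.symm hir]
  have hcardBi : m ≤ (B ∪ {i}).card := by
    rw [← hBi, Finset.card_insert_of_notMem hiB, hcard]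
    omega
  have hauth' : S ((B ∪ {i}) ∪ {r}) = S (B ∪ {i}) - s := hauth _ hrBi hcardBi
  -- unauthorized on B
  have hunauth' : S (B ∪ {r}) = S B + s := hunauth B hrB (le_of_eq hcard)
  -- Araki-Lieb with X = B ∪ {r}, Y = {i}
  have hdisj2 : Disjoint (B ∪ {r}) ({i} : Finset (Fin (2 * m))) := by
    simp [Finset.disjoint_singleton_right, hiB, hir]
  have hal := hAL (B ∪ {r}) {i} hdisj2
  rw [hunauth', hsingle i] at hal
  have hset : (B ∪ {r}) ∪ {i} = (B ∪ {i}) ∪ {r} := by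
    ext x; simp; tauto
  rw [hset, hauth'] at hal
  -- conclude
  rw [hBi]
  linarith
end

section
/- Let m ≥ 1, 1 ≤ L ≤ m, let the ground type be Option (Fin (2*m − L)) with r = none the reference symbol and the elements some i the players, and let s : ℝ. Suppose S : Finset (Option (Fin (2*m − L))) → ℝ satisfies: S {some i} = s for every player i; S {r} = L · s; subadditivity, S (X ∪ Y) ≤ S X + S Y for disjoint X, Y; the Araki–Lieb inequality, S (X ∪ Y) ≥ S X − S Y for disjoint X, Y; S (A ∪ {r}) = S A − L·s for every set A of players with |A| ≥ m; and S (B ∪ {r}) = S B + L·s for every set B of players with |B| ≤ m − L. Then for all disjoint sets B and C of players with |B| = m − L and |C| = L, one has S (B ∪ C) = S B + L · s, and moreover S C = L · s for every set C of L players. (This is the key intermediate step in the proof of the ramp QSS theorem: adding L shares to m−L shares increases the entropy maximally.) -/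
/-!
With `r` the reference and `t = L·s`, take `m − L` players `B` and `L` players `C`.
Araki–Lieb for `B ∪ {r}` against `C`, together with the forbidden condition for `B` and the
authorized condition for `B ∪ C`, gives `S B + 2t − S C ≤ S (B ∪ C)`. Subadditivity bounds
`S (B ∪ C)` by `S B + S C`, and `S C` by `L·s = t` (one `s` per share, starting from
`S ∅ = 0`, which is the forbidden condition for `B = ∅`); this squeezes both `S C` and
`S (B ∪ C) − S B` to `t`. Every set of `L` players has such a partner `B`, since
`2m − L − L ≥ m − L`.
-/

open Finset

theorem Finset.le_card_mul_of_subadditive {α : Type*} [DecidableEq α]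
    (S : Finset α → ℝ) (hempty : S ∅ ≤ 0)
    (hsubadd : ∀ X Y, Disjoint X Y → S (X ∪ Y) ≤ S X + S Y) {s : ℝ} :
    ∀ C : Finset α, (∀ a ∈ C, S {a} ≤ s) → S C ≤ #C * s := by
  intro C
  induction C using Finset.induction_on with
  | empty => simpa using hempty
  | insert a C ha ih =>
    intro hsingle
    have hd : Disjoint {a} C := disjoint_singleton_left.mpr ha
    calc S (insert a C) = S ({a} ∪ C) := by rw [insert_eq]
      _ ≤ S {a} + S C := hsubadd _ _ hd
      _ ≤ s + #C * s := add_le_add (hsingle a (mem_insert_self a C))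
          (ih fun b hb => hsingle b (mem_insert_of_mem hb))
      _ = #(insert a C) * s := by rw [card_insert_of_notMem ha]; push_cast; ring

theorem Finset.exists_subset_disjoint_card_eq {α : Type*} [DecidableEq α] {C U : Finset α}
    {k : ℕ} (h : k + #C ≤ #U) : ∃ B ⊆ U, Disjoint B C ∧ #B = k := by
  obtain ⟨B, hBsub, hBcard⟩ := exists_subset_card_eq (s := U \ C) (n := k)
    (by have := le_card_sdiff C U; omega)
  exact ⟨B, hBsub.trans sdiff_subset, disjoint_of_subset_left hBsub sdiff_disjoint, hBcard⟩

theorem add_entropy_eq_of_forbidden_of_authorized {α : Type*} [DecidableEq α]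
    (S : Finset α → ℝ) {r : α} {t : ℝ} {B C : Finset α}
    (hsubadd : ∀ X Y, Disjoint X Y → S (X ∪ Y) ≤ S X + S Y)
    (hAL : ∀ X Y, Disjoint X Y → S X - S Y ≤ S (X ∪ Y))
    (hrC : r ∉ C) (hBC : Disjoint B C) (hC : S C ≤ t)
    (hforb : S (B ∪ {r}) = S B + t) (hauth : S (B ∪ C ∪ {r}) = S (B ∪ C) - t) :
    S (B ∪ C) = S B + t ∧ S C = t := by
  have hdisj : Disjoint (B ∪ {r}) C :=
    disjoint_union_left.mpr ⟨hBC, disjoint_singleton_left.mpr hrC⟩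
  have hlower : S (B ∪ {r}) - S C ≤ S (B ∪ C ∪ {r}) := by
    simpa only [union_right_comm] using hAL _ _ hdisj
  have hupper := hsubadd B C hBC
  constructor <;> linarith

theorem ramp_qss_add_L_shares_maximal_general (m L : ℕ)
    (hLm : L ≤ m) (s : ℝ)
    (S : Finset (Option (Fin (2 * m - L))) → ℝ)
    (hsingle : ∀ i : Fin (2 * m - L), S {some i} = s)
    (href : S {none} = (L : ℝ) * s)
    (hsubadd : ∀ X Y : Finset (Option (Fin (2 * m - L))), Disjoint X Y →
      S (X ∪ Y) ≤ S X + S Y)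
    (hAL : ∀ X Y : Finset (Option (Fin (2 * m - L))), Disjoint X Y →
      S X - S Y ≤ S (X ∪ Y))
    (hauth : ∀ A : Finset (Option (Fin (2 * m - L))), none ∉ A → m ≤ A.card →
      S (A ∪ {none}) = S A - (L : ℝ) * s)
    (hforb : ∀ B : Finset (Option (Fin (2 * m - L))), none ∉ B → B.card ≤ m - L →
      S (B ∪ {none}) = S B + (L : ℝ) * s) :
    (∀ B C : Finset (Option (Fin (2 * m - L))), none ∉ B → none ∉ C →
      Disjoint B C → B.card = m - L → C.card = L →
      S (B ∪ C) = S B + (L : ℝ) * s) ∧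
    (∀ C : Finset (Option (Fin (2 * m - L))), none ∉ C → C.card = L →
      S C = (L : ℝ) * s) := by
  have hempty : S ∅ = 0 := by
    have := hforb ∅ (notMem_empty _) (Nat.zero_le _)
    rw [empty_union, href] at this
    linarith
  have hshares : ∀ C, none ∉ C → S C ≤ #C * s := fun C hC =>
    le_card_mul_of_subadditive S hempty.le hsubadd C fun
      | none, ha => absurd ha hC
      | some i, _ => (hsingle i).le
  have key : ∀ B C, none ∉ B → none ∉ C → Disjoint B C → #B = m - L → #C = L →
      S (B ∪ C) = S B + L * s ∧ S C = L * s := by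
    intro B C hB hC hBC hBcard hCcard
    have hBCcard : #(B ∪ C) = m := by rw [card_union_of_disjoint hBC]; omega
    refine add_entropy_eq_of_forbidden_of_authorized S hsubadd hAL hC hBC
      (hCcard ▸ hshares C hC) (hforb B hB hBcard.le) (hauth _ ?_ hBCcard.ge)
    exact notMem_union.mpr ⟨hB, hC⟩
  refine ⟨fun B C hB hC hBC hBcard hCcard => (key B C hB hC hBC hBcard hCcard).1, ?_⟩
  intro C hC hCcard
  have hroom : m - L + #C ≤ #({none}ᶜ : Finset (Option (Fin (2 * m - L)))) := by
    rw [card_compl, card_singleton, Fintype.card_option, Fintype.card_fin]; omega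
  obtain ⟨B, hBsub, hBC, hBcard⟩ := exists_subset_disjoint_card_eq hroom
  have hB : none ∉ B := fun h => mem_compl.mp (hBsub h) (mem_singleton_self _)
  exact (key B C hB hC hBC hBcard hCcard).2

/-- **Key step of the ramp QSS → maximal entanglement direction.**
The ground type is `Option (Fin (2*m − L))`: the `2m−L` players are `some i`, and
`none` is the reference symbol `r` (carrying the `L` reference qudits).  If the
entropy function `S` satisfies subadditivity, Araki–Lieb, `S {some i} = s`,
`S {r} = L·s`, and the authorized/forbidden conditions of a `(m, L, 2m−L)` ramp
QSS scheme, then adding any `L` shares `C` to any `m−L` shares `B` increases the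
entropy maximally, `S (B ∪ C) = S B + L·s`, and moreover every set `C` of `L`
shares has entropy `S C = L·s`. -/
theorem ramp_qss_add_L_shares_maximal (m L : ℕ)
    (hm : 1 ≤ m) (hL : 1 ≤ L) (hLm : L ≤ m) (s : ℝ)
    (S : Finset (Option (Fin (2 * m - L))) → ℝ)
    (hsingle : ∀ i : Fin (2 * m - L), S {some i} = s)
    (href : S {none} = (L : ℝ) * s)
    (hsubadd : ∀ X Y : Finset (Option (Fin (2 * m - L))), Disjoint X Y →
      S (X ∪ Y) ≤ S X + S Y)
    (hAL : ∀ X Y : Finset (Option (Fin (2 * m - L))), Disjoint X Y →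
      S X - S Y ≤ S (X ∪ Y))
    (hauth : ∀ A : Finset (Option (Fin (2 * m - L))), none ∉ A → m ≤ A.card →
      S (A ∪ {none}) = S A - (L : ℝ) * s)
    (hforb : ∀ B : Finset (Option (Fin (2 * m - L))), none ∉ B → B.card ≤ m - L →
      S (B ∪ {none}) = S B + (L : ℝ) * s) :
    (∀ B C : Finset (Option (Fin (2 * m - L))), none ∉ B → none ∉ C →
      Disjoint B C → B.card = m - L → C.card = L →
      S (B ∪ C) = S B + (L : ℝ) * s) ∧
    (∀ C : Finset (Option (Fin (2 * m - L))), none ∉ C → C.card = L →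
      S C = (L : ℝ) * s) :=
  ramp_qss_add_L_shares_maximal_general m L hLm s S hsingle href hsubadd hAL hauth hforb
end
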